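/- arXiv:1211.0172 — 4 statements merged into one kernel-verified Lean document; each statement's English description precedes it below -/
import Mathlib

section
/- Let G be an abelian group generated by a finite set S. Then the future causal subgroup S^(0)_+ (generated by ⋃_{n≥1} S^n S^{-n}) equals the causal subgroup S^(0) (generated by ⋃_{n∈ℤ} S^n S^{-n}); i.e., the Cayley graph Γ(G,S) is nonseparating. -/
open Pointwise

/-- The future causal subgroup `S⁽⁰⁾₊`, generated by `⋃_{n ≥ 1} Sⁿ S⁻ⁿ`. -/
def futureCausalSubgroup {G : Type*} [Group G] (S : Set G) : Subgroup G :=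
  Subgroup.closure (⋃ n : ℕ, S ^ (n + 1) * S⁻¹ ^ (n + 1))

/-- The causal subgroup `S⁽⁰⁾`, generated by `⋃_{n ∈ ℤ} Sⁿ S⁻ⁿ`, i.e. by all
products `Sⁿ S⁻ⁿ` (for `n ≥ 0`) together with all products `S⁻ⁿ Sⁿ`
(corresponding to negative `n`). -/
def fullCausalSubgroup {G : Type*} [Group G] (S : Set G) : Subgroup G :=
  Subgroup.closure ((⋃ n : ℕ, S ^ n * S⁻¹ ^ n) ∪ (⋃ n : ℕ, S⁻¹ ^ n * S ^ n))

theorem futureCausalSubgroup_le_fullCausalSubgroup {G : Type*} [Group G] (S : Set G) :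
    futureCausalSubgroup S ≤ fullCausalSubgroup S :=
  Subgroup.closure_mono <| Set.iUnion_subset fun n =>
    (Set.subset_iUnion (fun m : ℕ => S ^ m * S⁻¹ ^ m) (n + 1)).trans Set.subset_union_left

theorem pow_mul_inv_pow_subset_futureCausalSubgroup {G : Type*} [Group G] (S : Set G) :
    ∀ n : ℕ, S ^ n * S⁻¹ ^ n ⊆ futureCausalSubgroup S
  | 0 => by
    simpa only [pow_zero, mul_one, Set.one_subset, SetLike.mem_coe] using
      (futureCausalSubgroup S).one_mem
  | n + 1 => (Set.subset_iUnion (fun m : ℕ => S ^ (m + 1) * S⁻¹ ^ (m + 1)) n).trans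
    Subgroup.subset_closure

theorem abelian_nonseparating_general {G : Type*} [CommGroup G] (S : Set G) :
    futureCausalSubgroup S = fullCausalSubgroup S := by
  refine le_antisymm (futureCausalSubgroup_le_fullCausalSubgroup S) ?_
  rw [fullCausalSubgroup, Subgroup.closure_le]
  refine Set.union_subset (Set.iUnion_subset fun n => ?_) (Set.iUnion_subset fun n => ?_)
  · exact pow_mul_inv_pow_subset_futureCausalSubgroup S n
  · rw [mul_comm]
    exact pow_mul_inv_pow_subset_futureCausalSubgroup S n

/-- For an abelian group `G` generated by a finite set `S`, the future causal
subgroup equals the causal subgroup: the Cayley graph `Γ(G,S)` is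
nonseparating. -/
theorem abelian_nonseparating {G : Type*} [CommGroup G] (S : Set G)
    (hfin : S.Finite) (hgen : Subgroup.closure S = ⊤) :
    futureCausalSubgroup S = fullCausalSubgroup S :=
  abelian_nonseparating_general S
end

section
/- The total permutation operator P_{gφ} associated with a shifted S-preserving automorphism gφ commutes with the step operator T: T P_{gφ} = P_{gφ} T. -/
theorem HilbertBasis.ext {ι 𝕜 E F : Type*} [RCLike 𝕜] [NormedAddCommGroup E]
    [InnerProductSpace 𝕜 E] [TopologicalSpace F] [AddCommGroup F] [Module 𝕜 F] [T2Space F]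
    (b : HilbertBasis ι 𝕜 E) {A B : E →L[𝕜] F} (h : ∀ i, A (b i) = B (b i)) : A = B :=
  ContinuousLinearMap.ext_on
    (Submodule.dense_iff_topologicalClosure_eq_top.mpr b.dense_span) (Set.forall_mem_range.mpr h)

theorem perm_operator_commutes_step_general {G : Type*} [Group G] (S : Set G)
    (H : Type*) [NormedAddCommGroup H] [InnerProductSpace ℂ H]
    (e : HilbertBasis (G × ↥S) ℂ H) (T P : H →L[ℂ] H)
    (hT : ∀ (x : G) (c : ↥S), T (e (x, c)) = e (x * ↑c, c))
    (g : G) (φ : MulAut G)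
    (σ : ↥S ≃ ↥S) (hσ : ∀ c : ↥S, (↑(σ c) : G) = φ ↑c)
    (hP : ∀ (x : G) (c : ↥S), P (e (x, c)) = e (g * φ x, σ c)) :
    T ∘L P = P ∘L T :=
  e.ext fun ⟨x, c⟩ => by
    simp only [ContinuousLinearMap.comp_apply, hT, hP, hσ, map_mul, mul_assoc]

/-- The total permutation operator `P_{gφ}` (acting on the basis of
`ℋ = ℓ²(G) ⊗ ℓ²(S)` by `|x,c⟩ ↦ |g·φ(x), φ(c)⟩`, for `g ∈ G` and an
automorphism `φ` of `G` with `φ(S) = S`) commutes with the step operator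
`T : |x,c⟩ ↦ |xc,c⟩`. -/
theorem perm_operator_commutes_step {G : Type*} [Group G] (S : Set G)
    (H : Type*) [NormedAddCommGroup H] [InnerProductSpace ℂ H] [CompleteSpace H]
    (e : HilbertBasis (G × ↥S) ℂ H) (T P : H →L[ℂ] H)
    (hT : ∀ (x : G) (c : ↥S), T (e (x, c)) = e (x * ↑c, c))
    (g : G) (φ : MulAut G) (hφ : ⇑φ '' S = S)
    (σ : ↥S ≃ ↥S) (hσ : ∀ c : ↥S, (↑(σ c) : G) = φ ↑c)
    (hP : ∀ (x : G) (c : ↥S), P (e (x, c)) = e (g * φ x, σ c)) :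
    T ∘L P = P ∘L T :=
  perm_operator_commutes_step_general S H e T P hT g φ σ hσ hP
end

section
/- Let (U_n) be a sequence of local unitaries and (C_n), (C̃_n) quantum coins. The family of identities W_{C̃}(n)|ψ̃₀⟩ = U_n W_C(n)|ψ₀⟩ for all n ≥ 0 and all initial states |ψ₀⟩ holds if and only if |ψ̃₀⟩ = U₀|ψ₀⟩ and T C̃_n = U_{n+1} T C_n U_n† for all n ≥ 0. -/
/-!
Since `W_C(n+1) = T C_n W_C(n)`, once the identity holds at step `n` the identity at step `n+1`
reads `T C̃_n U_n W_C(n) ψ₀ = U_{n+1} T C_n W_C(n) ψ₀` for all `ψ₀`. The walk operator `W_C(n)`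
is unitary, hence surjective, so this is the operator identity `T C̃_n U_n = U_{n+1} T C_n`,
i.e. `T C̃_n = U_{n+1} T C_n U_n†`. Induction on `n`, started by `W(0) = Id`, gives both directions.
-/

open scoped InnerProductSpace

/-- `A` is a local operation on `ℋ = ℓ²(G) ⊗ ℓ²(S)`: it has no matrix
elements between distinct positions, i.e. `A = Σ_{x ∈ G} |x⟩⟨x| ⊗ A_x`. -/
def IsLocal {G : Type*} [Group G] {S : Set G}
    {H : Type*} [NormedAddCommGroup H] [InnerProductSpace ℂ H]
    (e : HilbertBasis (G × ↥S) ℂ H) (A : H →L[ℂ] H) : Prop :=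
  ∀ (x y : G) (c d : ↥S), y ≠ x → ⟪e (y, d), A (e (x, c))⟫_ℂ = 0

/-- The quantum walk evolution operator `W_C(n) = T C_{n-1} T C_{n-2} ⋯ T C_0`
(with `W_C(0) = Id`). -/
def walkOp {H : Type*} [NormedAddCommGroup H] [InnerProductSpace ℂ H]
    (T : H →L[ℂ] H) (C : ℕ → H →L[ℂ] H) : ℕ → H →L[ℂ] H
  | 0 => 1
  | n + 1 => T ∘L C n ∘L walkOp T C n

namespace ContinuousLinearMap

variable {𝕜 E : Type*} [RCLike 𝕜] [NormedAddCommGroup E] [InnerProductSpace 𝕜 E] [CompleteSpace E]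

theorem surjective_of_mem_unitary {W : E →L[𝕜] E} (hW : W ∈ unitary (E →L[𝕜] E)) :
    Function.Surjective W := fun y =>
  ⟨star W y, by simpa using congr($(Unitary.mul_star_self_of_mem hW) y)⟩

theorem eq_comp_star_iff_comp_eq {A B U : E →L[𝕜] E} (hU : U ∈ unitary (E →L[𝕜] E)) :
    A = B ∘L star U ↔ A ∘L U = B := by
  constructor
  · rintro rfl
    rw [comp_assoc, ← mul_def (star U), Unitary.star_mul_self_of_mem hU]
    rfl
  · rintro rfl
    rw [comp_assoc, ← mul_def U, Unitary.mul_star_self_of_mem hU]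
    rfl

end ContinuousLinearMap

section walkOp

variable {H : Type*} [NormedAddCommGroup H] [InnerProductSpace ℂ H]

@[simp]
theorem walkOp_succ_apply (T : H →L[ℂ] H) (C : ℕ → H →L[ℂ] H) (n : ℕ) (ψ : H) :
    walkOp T C (n + 1) ψ = T (C n (walkOp T C n ψ)) := rfl

theorem walkOp_mem_unitary [CompleteSpace H] {T : H →L[ℂ] H} {C : ℕ → H →L[ℂ] H}
    (hT : T ∈ unitary (H →L[ℂ] H)) (hC : ∀ n, C n ∈ unitary (H →L[ℂ] H)) (n : ℕ) :
    walkOp T C n ∈ unitary (H →L[ℂ] H) := by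
  induction n with
  | zero => exact one_mem _
  | succ n ih => exact mul_mem hT (mul_mem (hC n) ih)

theorem walkOp_succ_intertwine_iff [CompleteSpace H] {T : H →L[ℂ] H}
    {U C Ct : ℕ → H →L[ℂ] H} {Ψ : H → H} {n : ℕ} (hU : U n ∈ unitary (H →L[ℂ] H))
    (hW : Function.Surjective (walkOp T C n))
    (hn : ∀ ψ₀, walkOp T Ct n (Ψ ψ₀) = U n (walkOp T C n ψ₀)) :
    (∀ ψ₀, walkOp T Ct (n + 1) (Ψ ψ₀) = U (n + 1) (walkOp T C (n + 1) ψ₀)) ↔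
      T ∘L Ct n = U (n + 1) ∘L T ∘L C n ∘L star (U n) := by
  rw [show U (n + 1) ∘L T ∘L C n ∘L star (U n) = (U (n + 1) ∘L T ∘L C n) ∘L star (U n) by rfl,
    ContinuousLinearMap.eq_comp_star_iff_comp_eq hU, ContinuousLinearMap.ext_iff]
  simp only [walkOp_succ_apply, hn, ContinuousLinearMap.comp_apply]
  exact (hW.forall (p := fun v => T (Ct n (U n v)) = U (n + 1) (T (C n v)))).symm

end walkOp

theorem symmetry_iff_difference_conditions_general {G : Type*} [Group G] (S : Set G)
    (H : Type*) [NormedAddCommGroup H] [InnerProductSpace ℂ H] [CompleteSpace H]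
    (e : HilbertBasis (G × ↥S) ℂ H) (T : H →L[ℂ] H)
    (hTu : T ∈ unitary (H →L[ℂ] H))
    (U C Ct : ℕ → H →L[ℂ] H)
    (hU : ∀ n, U n ∈ unitary (H →L[ℂ] H) ∧ IsLocal e (U n))
    (hC : ∀ n, C n ∈ unitary (H →L[ℂ] H) ∧ IsLocal e (C n))
    (Ψ : H → H) :
    (∀ (n : ℕ) (ψ₀ : H), walkOp T Ct n (Ψ ψ₀) = U n (walkOp T C n ψ₀)) ↔
      ((∀ ψ₀ : H, Ψ ψ₀ = U 0 ψ₀) ∧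
        ∀ n : ℕ, T ∘L Ct n = U (n + 1) ∘L T ∘L C n ∘L star (U n)) := by
  have hW (n : ℕ) : Function.Surjective (walkOp T C n) :=
    ContinuousLinearMap.surjective_of_mem_unitary (walkOp_mem_unitary hTu (fun k => (hC k).1) n)
  have step (n : ℕ) := walkOp_succ_intertwine_iff (Ct := Ct) (Ψ := Ψ) (hU n).1 (hW n)
  constructor
  · intro h
    exact ⟨h 0, fun n => (step n (h n)).1 (h (n + 1))⟩
  · rintro ⟨h0, hstep⟩ n
    induction n with
    | zero => exact h0
    | succ n ih => exact (step n ih).2 (hstep n)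

/-- For a sequence `(U_n)` of local unitaries and quantum coins `(C_n)`,
`(C̃_n)`, the family of identities `W_{C̃}(n) |ψ̃₀⟩ = U_n W_C(n) |ψ₀⟩` (for
all `n ≥ 0` and all initial states `ψ₀`, with `ψ̃₀` the transform of `ψ₀`)
holds if and only if `ψ̃₀ = U₀ ψ₀` for all `ψ₀` and
`T C̃_n = U_{n+1} T C_n U_n†` for all `n ≥ 0`. -/
theorem symmetry_iff_difference_conditions {G : Type*} [Group G] (S : Set G)
    (H : Type*) [NormedAddCommGroup H] [InnerProductSpace ℂ H] [CompleteSpace H]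
    (e : HilbertBasis (G × ↥S) ℂ H) (T : H →L[ℂ] H)
    (hT : ∀ (x : G) (c : ↥S), T (e (x, c)) = e (x * ↑c, c))
    (hTu : T ∈ unitary (H →L[ℂ] H))
    (U C Ct : ℕ → H →L[ℂ] H)
    (hU : ∀ n, U n ∈ unitary (H →L[ℂ] H) ∧ IsLocal e (U n))
    (hC : ∀ n, C n ∈ unitary (H →L[ℂ] H) ∧ IsLocal e (C n))
    (hCt : ∀ n, Ct n ∈ unitary (H →L[ℂ] H) ∧ IsLocal e (Ct n))
    (Ψ : H → H) :
    (∀ (n : ℕ) (ψ₀ : H), walkOp T Ct n (Ψ ψ₀) = U n (walkOp T C n ψ₀)) ↔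
      ((∀ ψ₀ : H, Ψ ψ₀ = U 0 ψ₀) ∧
        ∀ n : ℕ, T ∘L Ct n = U (n + 1) ∘L T ∘L C n ∘L star (U n)) :=
  symmetry_iff_difference_conditions_general S H e T hTu U C Ct hU hC Ψ
end

section
/- Suppose a sequence of local unitaries (U_n) satisfies T C̃_n = U_{n+1} T C_n U_n† for all n ≥ 0 and for all quantum coins (C_n) (with corresponding (C̃_n) local unitaries). Then for every n ≥ 1, each component U_{n,x} is diagonal in the geometrical basis of ℓ²(S); i.e., there exist complex units u_{n,x,c} with U_n = Σ_{x∈G} Σ_{c∈S} u_{n,x,c} |x,c⟩⟨x,c|. -/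
/-!
Feeding the coin `C := U` itself into the symmetry relation cancels `U_m U_m†`, so
`T C̃_m = U_{m+1} T`, i.e. `U_{m+1} = T C̃_m T†`. Conjugating by the step `T` turns the matrix
element `⟨y,d| U_{m+1} |x,c⟩` into `⟨y d⁻¹,d| C̃_m |x c⁻¹,c⟩`. Locality of `U_{m+1}` forces
`y = x`, and then locality of `C̃_m` forces `y d⁻¹ = x c⁻¹`, i.e. `d = c`. A unitary that is
diagonal in an orthonormal basis has unimodular diagonal entries.
-/

open scoped InnerProductSpace

section HilbertSpace

variable {ι 𝕜 E : Type*} [RCLike 𝕜] [NormedAddCommGroup E] [InnerProductSpace 𝕜 E]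

theorem HilbertBasis.apply_eq_inner_smul_of_inner_eq_zero (b : HilbertBasis ι 𝕜 E)
    (A : E →L[𝕜] E) {i : ι} (h : ∀ j, j ≠ i → ⟪b j, A (b i)⟫_𝕜 = 0) :
    A (b i) = ⟪b i, A (b i)⟫_𝕜 • b i := by
  classical
  refine b.repr.injective <| lp.ext <| funext fun j => ?_
  simp only [HilbertBasis.repr_apply_apply, inner_smul_right,
    orthonormal_iff_ite.mp b.orthonormal]
  by_cases hj : j = i
  · subst hj; simp
  · simp [hj, h j hj]

variable [CompleteSpace E]

theorem norm_eq_one_of_mem_unitary_of_apply_eq_smul {A : E →L[𝕜] E}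
    (hA : A ∈ unitary (E →L[𝕜] E)) {v : E} (hv : ‖v‖ = 1) {u : 𝕜} (h : A v = u • v) :
    ‖u‖ = 1 := by
  simpa [h, norm_smul, hv] using A.norm_map_of_mem_unitary hA v

theorem inner_map_apply_map_of_comp_eq {T A B : E →L[𝕜] E} (hT : T ∈ unitary (E →L[𝕜] E))
    (h : T ∘L A = B ∘L T) (v w : E) : ⟪T v, B (T w)⟫_𝕜 = ⟪v, A w⟫_𝕜 := by
  rw [← ContinuousLinearMap.comp_apply B T, ← h, ContinuousLinearMap.comp_apply,
    T.inner_map_map_of_mem_unitary hT]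

end HilbertSpace

section QuantumWalk

variable {G : Type*} [Group G] {S : Set G} {H : Type*} [NormedAddCommGroup H]
  [InnerProductSpace ℂ H] {e : HilbertBasis (G × ↥S) ℂ H} {T : H →L[ℂ] H}

theorem step_apply_mul_inv (hT : ∀ (x : G) (c : ↥S), T (e (x, c)) = e (x * ↑c, c))
    (x : G) (c : ↥S) : T (e (x * (↑c)⁻¹, c)) = e (x, c) := by
  rw [hT, inv_mul_cancel_right]

theorem inner_eq_zero_of_isLocal_of_step_comp_eq [CompleteSpace H]
    (hT : ∀ (x : G) (c : ↥S), T (e (x, c)) = e (x * ↑c, c))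
    (hTu : T ∈ unitary (H →L[ℂ] H)) {A B : H →L[ℂ] H} (hA : IsLocal e A) (hB : IsLocal e B)
    (hAB : T ∘L A = B ∘L T) {x y : G} {c d : ↥S} (hne : (y, d) ≠ (x, c)) :
    ⟪e (y, d), B (e (x, c))⟫_ℂ = 0 := by
  obtain rfl | hyx := eq_or_ne y x
  · have hdc : d ≠ c := fun h => hne (by rw [h])
    rw [← step_apply_mul_inv hT, ← step_apply_mul_inv hT y c,
      inner_map_apply_map_of_comp_eq hTu hAB]
    refine hA _ _ c d fun h => hdc (Subtype.ext ?_)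
    exact inv_injective (mul_left_cancel h)
  · exact hB x y c d hyx

end QuantumWalk

/-- If a sequence `(U_n)` of local unitaries satisfies
`T C̃_n = U_{n+1} T C_n U_n†` (for all `n`, with `(C̃_n)` local unitaries)
for every quantum coin `(C_n)`, then for every `n ≥ 1` each component
`U_{n,x}` is diagonal in the geometrical basis: there are complex units
`u_{n,x,c}` with `U_n = Σ_{x,c} u_{n,x,c} |x,c⟩⟨x,c|`. -/
theorem symmetry_components_diagonal {G : Type*} [Group G] [DecidableEq G] (S : Set G) [DecidableEq ↥S]
    (H : Type*) [NormedAddCommGroup H] [InnerProductSpace ℂ H] [CompleteSpace H]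
    (e : HilbertBasis (G × ↥S) ℂ H) (T : H →L[ℂ] H)
    (hT : ∀ (x : G) (c : ↥S), T (e (x, c)) = e (x * ↑c, c))
    (hTu : T ∈ unitary (H →L[ℂ] H))
    (U : ℕ → H →L[ℂ] H)
    (hU : ∀ n, U n ∈ unitary (H →L[ℂ] H) ∧ IsLocal e (U n))
    (hsymm : ∀ C : ℕ → H →L[ℂ] H,
      (∀ n, C n ∈ unitary (H →L[ℂ] H) ∧ IsLocal e (C n)) →
      ∃ Ct : ℕ → H →L[ℂ] H,
        (∀ n, Ct n ∈ unitary (H →L[ℂ] H) ∧ IsLocal e (Ct n)) ∧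
        ∀ n : ℕ, T ∘L Ct n = U (n + 1) ∘L T ∘L C n ∘L star (U n)) :
    ∀ n : ℕ, 1 ≤ n → ∃ u : G → ↥S → ℂ,
      (∀ (x : G) (c : ↥S), ‖u x c‖ = 1) ∧
      ∀ (x y : G) (c d : ↥S),
        ⟪e (y, d), U n (e (x, c))⟫_ℂ = if (y, d) = (x, c) then u x c else 0 := by
  intro n hn
  obtain ⟨m, rfl⟩ : ∃ m, n = m + 1 := ⟨n - 1, by omega⟩
  obtain ⟨Ct, hCt, hrel⟩ := hsymm U hU
  have hconj : T ∘L Ct m = U (m + 1) ∘L T := by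
    simpa [← ContinuousLinearMap.mul_def, Unitary.mul_star_self_of_mem (hU m).1] using hrel m
  have hoff : ∀ {x y : G} {c d : ↥S}, (y, d) ≠ (x, c) → ⟪e (y, d), U (m + 1) (e (x, c))⟫_ℂ = 0 :=
    inner_eq_zero_of_isLocal_of_step_comp_eq hT hTu (hCt m).2 (hU (m + 1)).2 hconj
  refine ⟨fun x c => ⟪e (x, c), U (m + 1) (e (x, c))⟫_ℂ, fun x c => ?_, fun x y c d => ?_⟩
  · exact norm_eq_one_of_mem_unitary_of_apply_eq_smul (hU (m + 1)).1
      (e.orthonormal.1 (x, c)) (e.apply_eq_inner_smul_of_inner_eq_zero _ fun _ hj => hoff hj)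
  · split_ifs with h
    · simp only [Prod.mk.injEq] at h
      rw [h.1, h.2]
    · exact hoff h
end
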